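/- Let (M, α_M) →^i (K, α_K) →^σ (L, α_L) be a central extension of hom-Lie-Rinehart algebras over (A, φ). If every central extension of (K, α_K) splits uniquely in the category of hom-Lie-Rinehart algebras over (A, φ) — that is, for every central extension (N, α_N) →^j (L', α_{L'}) →^τ (K, α_K) there exists a unique homomorphism s: (K, α_K) → (L', α_{L'}) over (A, φ) with τ ∘ s = Id_K — then (M, α_M) →^i (K, α_K) →^σ (L, α_L) is a universal central extension of (L, α_L). -/

import Mathlib

open TensorProduct Function Set

/-- A hom-Lie-Rinehart algebra structure over `(A, φ)` on the `A`-module `L`. -/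
structure HLR (R A : Type) [CommRing R] [CommRing A] [Algebra R A]
    (φ : A →ₐ[R] A) (L : Type) [AddCommGroup L] [Module R L]
    [Module A L] [IsScalarTower R A L] : Type where
  bracket : L → L → L
  add_left : ∀ x y z, bracket (x + y) z = bracket x z + bracket y z
  add_right : ∀ x y z, bracket x (y + z) = bracket x y + bracket x z
  smul_left : ∀ (r : R) (x y : L), bracket (r • x) y = r • bracket x y
  smul_right : ∀ (r : R) (x y : L), bracket x (r • y) = r • bracket x y
  skew : ∀ x y, bracket x y = - bracket y x
  alpha : L → L
  alpha_add : ∀ x y, alpha (x + y) = alpha x + alpha y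
  alpha_smulR : ∀ (r : R) (x : L), alpha (r • x) = r • alpha x
  rho : L → A → A
  rho_add_left : ∀ x y a, rho (x + y) a = rho x a + rho y a
  rho_smulR_left : ∀ (r : R) (x : L) (a : A), rho (r • x) a = r • rho x a
  rho_add_right : ∀ (x : L) (a b : A), rho x (a + b) = rho x a + rho x b
  rho_smulR_right : ∀ (x : L) (r : R) (a : A), rho x (r • a) = r • rho x a
  rho_deriv : ∀ (x : L) (a b : A), rho x (a * b) = φ a * rho x b + φ b * rho x a
  alpha_bracket : ∀ x y, alpha (bracket x y) = bracket (alpha x) (alpha y)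
  hom_jacobi : ∀ x y z, bracket (alpha x) (bracket y z)
      + bracket (alpha y) (bracket z x) + bracket (alpha z) (bracket x y) = 0
  alpha_smulA : ∀ (a : A) (x : L), alpha (a • x) = φ a • alpha x
  rho_alpha : ∀ (x : L) (a : A), rho (alpha x) (φ a) = φ (rho x a)
  rho_bracket : ∀ (x y : L) (a : A), rho (bracket x y) (φ a)
      = rho (alpha x) (rho y a) - rho (alpha y) (rho x a)
  rho_smulA : ∀ (a : A) (x : L) (b : A), rho (a • x) b = φ a * rho x b
  leibniz : ∀ (x : L) (a : A) (y : L),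
      bracket x (a • y) = φ a • bracket x y + rho x a • alpha y

section Defs

variable {R A : Type} [CommRing R] [CommRing A] [Algebra R A] {φ : A →ₐ[R] A}

/-- Homomorphism of hom-Lie-Rinehart algebras over `(A, φ)`: an `A`-linear map
preserving brackets, the twist maps and the anchors. -/
def IsHLRHom {K L : Type}
    [AddCommGroup K] [Module R K] [Module A K] [IsScalarTower R A K]
    [AddCommGroup L] [Module R L] [Module A L] [IsScalarTower R A L]
    (SK : HLR R A φ K) (SL : HLR R A φ L) (f : K → L) : Prop :=
  (∀ x y, f (x + y) = f x + f y) ∧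
  (∀ (a : A) (x : K), f (a • x) = a • f x) ∧
  (∀ x y, f (SK.bracket x y) = SL.bracket (f x) (f y)) ∧
  (∀ x, f (SK.alpha x) = SL.alpha (f x)) ∧
  (∀ (x : K) (a : A), SL.rho (f x) a = SK.rho x a)

/-- The center `Z_A(L)` of a hom-Lie-Rinehart algebra. -/
def HLR.center {L : Type}
    [AddCommGroup L] [Module R L] [Module A L] [IsScalarTower R A L]
    (S : HLR R A φ L) : Set L :=
  {x | ∀ (a : A) (z : L),
    S.bracket (a • x) z = 0 ∧ S.bracket (a • S.alpha x) z = 0 ∧ S.rho x a = 0}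

/-- `(M, i) → (K, σ)` is a central extension of `L`. -/
def IsCentralExt {M K L : Type}
    [AddCommGroup M] [Module R M] [Module A M] [IsScalarTower R A M]
    [AddCommGroup K] [Module R K] [Module A K] [IsScalarTower R A K]
    [AddCommGroup L] [Module R L] [Module A L] [IsScalarTower R A L]
    (SM : HLR R A φ M) (SK : HLR R A φ K) (SL : HLR R A φ L)
    (i : M → K) (σ : K → L) : Prop :=
  IsHLRHom SM SK i ∧ IsHLRHom SK SL σ ∧ Function.Injective i ∧
  Function.Surjective σ ∧ Set.range i = {k | σ k = 0} ∧
  {k | σ k = 0} ⊆ SK.center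

/-- `(M, i) → (K, σ)` is an `α`-central extension of `L`. -/
def IsAlphaCentralExt {M K L : Type}
    [AddCommGroup M] [Module R M] [Module A M] [IsScalarTower R A M]
    [AddCommGroup K] [Module R K] [Module A K] [IsScalarTower R A K]
    [AddCommGroup L] [Module R L] [Module A L] [IsScalarTower R A L]
    (SM : HLR R A φ M) (SK : HLR R A φ K) (SL : HLR R A φ L)
    (i : M → K) (σ : K → L) : Prop :=
  IsHLRHom SM SK i ∧ IsHLRHom SK SL σ ∧ Function.Injective i ∧
  Function.Surjective σ ∧ Set.range i = {k | σ k = 0} ∧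
  (∀ m : M, i (SM.alpha m) ∈ SK.center)

/-- A hom-Lie-Rinehart algebra is perfect if `L = {L, L}`, the `A`-submodule
generated by all brackets. -/
def HLR.IsPerfect {L : Type}
    [AddCommGroup L] [Module R L] [Module A L] [IsScalarTower R A L]
    (S : HLR R A φ L) : Prop :=
  Submodule.span A {z : L | ∃ x y, z = S.bracket x y} = ⊤

/-- A hom-Lie-Rinehart algebra is `α`-perfect if `L = {α_L(L), α_L(L)}`. -/
def HLR.IsAlphaPerfect {L : Type}
    [AddCommGroup L] [Module R L] [Module A L] [IsScalarTower R A L]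
    (S : HLR R A φ L) : Prop :=
  Submodule.span A {z : L | ∃ x y, z = S.bracket (S.alpha x) (S.alpha y)} = ⊤

/-- Universal central extension. -/
def IsUniversalCentralExt {M K L : Type}
    [AddCommGroup M] [Module R M] [Module A M] [IsScalarTower R A M]
    [AddCommGroup K] [Module R K] [Module A K] [IsScalarTower R A K]
    [AddCommGroup L] [Module R L] [Module A L] [IsScalarTower R A L]
    (SM : HLR R A φ M) (SK : HLR R A φ K) (SL : HLR R A φ L)
    (i : M → K) (σ : K → L) : Prop :=
  IsCentralExt SM SK SL i σ ∧
  ∀ (M' L' : Type)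
    [AddCommGroup M'] [Module R M'] [Module A M'] [IsScalarTower R A M']
    [AddCommGroup L'] [Module R L'] [Module A L'] [IsScalarTower R A L']
    (SM' : HLR R A φ M') (SL' : HLR R A φ L') (j : M' → L') (τ : L' → L),
    IsCentralExt SM' SL' SL j τ →
    ∃! h : K → L', IsHLRHom SK SL' h ∧ ∀ x, τ (h x) = σ x

/-- Universal `α`-central extension. -/
def IsUniversalAlphaCentralExt {M K L : Type}
    [AddCommGroup M] [Module R M] [Module A M] [IsScalarTower R A M]
    [AddCommGroup K] [Module R K] [Module A K] [IsScalarTower R A K]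
    [AddCommGroup L] [Module R L] [Module A L] [IsScalarTower R A L]
    (SM : HLR R A φ M) (SK : HLR R A φ K) (SL : HLR R A φ L)
    (i : M → K) (σ : K → L) : Prop :=
  IsCentralExt SM SK SL i σ ∧
  ∀ (M' L' : Type)
    [AddCommGroup M'] [Module R M'] [Module A M'] [IsScalarTower R A M']
    [AddCommGroup L'] [Module R L'] [Module A L'] [IsScalarTower R A L']
    (SM' : HLR R A φ M') (SL' : HLR R A φ L') (j : M' → L') (τ : L' → L),
    IsAlphaCentralExt SM' SL' SL j τ →
    ∃! h : K → L', IsHLRHom SK SL' h ∧ ∀ x, τ (h x) = σ x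

end Defs

section UceDefs

variable {R A : Type} [CommRing R] [CommRing A] [Algebra R A] (φ : A →ₐ[R] A)
variable {L : Type} [AddCommGroup L] [Module R L] [Module A L] [IsScalarTower R A L]

/-- The `A`-submodule `M^φ_A L` of `A ⊗ L ⊗ L` of defining relations of `uce^φ_A L`. -/
def uceRel (S : HLR R A φ L) : Submodule A (A ⊗[R] (L ⊗[R] L)) :=
  Submodule.span A
    ({t | ∃ (a : A) (x : L), t = a ⊗ₜ[R] (x ⊗ₜ[R] x)} ∪
     {t | ∃ (a : A) (x y : L), t = a ⊗ₜ[R] (x ⊗ₜ[R] y) + a ⊗ₜ[R] (y ⊗ₜ[R] x)} ∪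
     {t | ∃ (a : A) (x y z : L), t =
        a ⊗ₜ[R] (S.alpha x ⊗ₜ[R] S.bracket y z)
          + a ⊗ₜ[R] (S.alpha y ⊗ₜ[R] S.bracket z x)
          + a ⊗ₜ[R] (S.alpha z ⊗ₜ[R] S.bracket x y)} ∪
     {t | ∃ (a : A) (x y x' y' : L), t =
        φ a ⊗ₜ[R] (S.bracket x y ⊗ₜ[R] S.bracket x' y')
          + S.rho (S.bracket x y) a ⊗ₜ[R] (S.alpha x' ⊗ₜ[R] S.alpha y')
          - (1 : A) ⊗ₜ[R] (S.bracket x y ⊗ₜ[R] (a • S.bracket x' y'))})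

/-- The underlying `A`-module of `uce^φ_A L`. -/
abbrev UCE (S : HLR R A φ L) : Type := (A ⊗[R] (L ⊗[R] L)) ⧸ uceRel φ S

/-- The coset `(a, x, y)` in `uce^φ_A L`. -/
noncomputable def uceMk (S : HLR R A φ L) (a : A) (x y : L) : UCE φ S :=
  Submodule.Quotient.mk (a ⊗ₜ[R] (x ⊗ₜ[R] y))

/-- `U` is the hom-Lie-Rinehart structure of `uce^φ_A L`: its bracket, twist map and anchor
are given by the defining formulas on cosets. -/
def IsUceStructure (S : HLR R A φ L) (U : HLR R A φ (UCE φ S)) : Prop :=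
  (∀ (a₁ a₂ : A) (x₁ y₁ x₂ y₂ : L),
    U.bracket (uceMk φ S a₁ x₁ y₁) (uceMk φ S a₂ x₂ y₂) =
      uceMk φ S (φ (a₁ * a₂)) (S.bracket x₁ y₁) (S.bracket x₂ y₂)
      + uceMk φ S (φ a₁ * S.rho (S.bracket x₁ y₁) a₂) (S.alpha x₂) (S.alpha y₂)
      - uceMk φ S (φ a₂ * S.rho (S.bracket x₂ y₂) a₁) (S.alpha x₁) (S.alpha y₁)) ∧
  (∀ (a : A) (x y : L),
    U.alpha (uceMk φ S a x y) = uceMk φ S (φ a) (S.alpha x) (S.alpha y)) ∧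
  (∀ (a b : A) (x y : L),
    U.rho (uceMk φ S a x y) b = φ a * S.rho (S.bracket x y) b)

/-- `u` is the canonical map `u_L : uce^φ_A L → L`, `(a,x,y) ↦ a • [x,y]`. -/
def IsUceMap (S : HLR R A φ L) (u : UCE φ S → L) : Prop :=
  (∀ ξ η, u (ξ + η) = u ξ + u η) ∧
  (∀ (a : A) (ξ : UCE φ S), u (a • ξ) = a • u ξ) ∧
  (∀ (a : A) (x y : L), u (uceMk φ S a x y) = a • S.bracket x y)

end UceDefs

section MoreDefs

variable {R A : Type} [CommRing R] [CommRing A] [Algebra R A] (φ : A →ₐ[R] A)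

/-- `F` is the homomorphism `uce^φ_A(f)` induced by `f` on universal central extensions. -/
def IsUceFunctorMap {K L : Type}
    [AddCommGroup K] [Module R K] [Module A K] [IsScalarTower R A K]
    [AddCommGroup L] [Module R L] [Module A L] [IsScalarTower R A L]
    (SK : HLR R A φ K) (SL : HLR R A φ L)
    (UK : HLR R A φ (UCE φ SK)) (UL : HLR R A φ (UCE φ SL))
    (f : K → L) (F : UCE φ SK → UCE φ SL) : Prop :=
  IsHLRHom UK UL F ∧
  ∀ (a : A) (x y : K), F (uceMk φ SK a x y) = uceMk φ SL a (f x) (f y)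

/-- `D` is an `α`-derivation of `(L, α_L)` with symbol `σD`. -/
def IsAlphaDeriv {L : Type}
    [AddCommGroup L] [Module R L] [Module A L] [IsScalarTower R A L]
    (S : HLR R A φ L) (D : L → L) (σD : A → A) : Prop :=
  (∀ x y, D (x + y) = D x + D y) ∧
  (∀ (r : R) (x : L), D (r • x) = r • D x) ∧
  (∀ a b, σD (a + b) = σD a + σD b) ∧
  (∀ (r : R) (a : A), σD (r • a) = r • σD a) ∧
  (∀ a b, σD (a * b) = φ a * σD b + φ b * σD a) ∧
  (∀ x, D (S.alpha x) = S.alpha (D x)) ∧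
  (∀ x y, D (S.bracket x y) = S.bracket (D x) (S.alpha y) + S.bracket (S.alpha x) (D y)) ∧
  (∀ a, σD (φ a) = φ (σD a)) ∧
  (∀ (a : A) (x : L), D (a • x) = φ a • D x + σD a • S.alpha x) ∧
  (∀ (x : L) (a : A), σD (S.rho x a) = S.rho (S.alpha x) (σD a) + S.rho (D x) (φ a))

/-- A quasi hom-action of `(L, α_L)` on `(M, α_M)`. -/
def IsQuasiHomAction {L M : Type}
    [AddCommGroup L] [Module R L] [Module A L] [IsScalarTower R A L]
    [AddCommGroup M] [Module R M] [Module A M] [IsScalarTower R A M]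
    (SL : HLR R A φ L) (SM : HLR R A φ M) (act : L → M → M) : Prop :=
  (∀ (x : L) (a : A) (m : M),
      act x (a • m) = φ a • act x m + SL.rho x a • SM.alpha m) ∧
  (∀ (x y : L) (m : M),
      act (SL.bracket x y) (SM.alpha m)
        = act (SL.alpha x) (act y m) - act (SL.alpha y) (act x m)) ∧
  (∀ (x : L) (m n : M),
      act (SL.alpha x) (SM.bracket m n)
        = SM.bracket (act x m) (SM.alpha n) + SM.bracket (SM.alpha m) (act x n)) ∧
  (∀ (x : L) (m : M) (a : A),
      SM.rho (act x m) (φ a)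
        = SL.rho (SL.alpha x) (SM.rho m a) - SM.rho (SM.alpha m) (SL.rho x a)) ∧
  (∀ (x : L) (m : M), SM.alpha (act x m) = act (SL.alpha x) (SM.alpha m))

/-- Compatibility of two quasi hom-actions on each other. -/
def AreCompatibleActions {L M : Type}
    [AddCommGroup L] [Module R L] [Module A L] [IsScalarTower R A L]
    [AddCommGroup M] [Module R M] [Module A M] [IsScalarTower R A M]
    (SL : HLR R A φ L) (SM : HLR R A φ M)
    (actLM : L → M → M) (actML : M → L → L) : Prop :=
  (∀ (x : L) (m : M) (a : A), SM.rho (actLM x m) a = - SL.rho (actML m x) a) ∧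
  (∀ (m : M) (x : L) (n : M), actLM (actML m x) n = SM.bracket n (actLM x m)) ∧
  (∀ (x : L) (m : M) (y : L), actML (actLM x m) y = SL.bracket y (actML m x))

end MoreDefs

section StarDefs

variable {R A : Type} [CommRing R] [CommRing A] [Algebra R A] (φ : A →ₐ[R] A)
variable {L M : Type}
  [AddCommGroup L] [Module R L] [Module A L] [IsScalarTower R A L]
  [AddCommGroup M] [Module R M] [Module A M] [IsScalarTower R A M]

/-- The `A`-submodule of defining relations of the non-abelian tensor product `L ∗ M`,
inside the free `A`-module on the symbols `x ∗ m`. -/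
noncomputable def starRel (SL : HLR R A φ L) (SM : HLR R A φ M)
    (actLM : L → M → M) (actML : M → L → L) : Submodule A ((L × M) →₀ A) :=
  Submodule.span A
    ({t | ∃ (x y : L) (m : M), t =
        Finsupp.single (x + y, m) (1 : A) - Finsupp.single (x, m) 1
          - Finsupp.single (y, m) 1} ∪
     {t | ∃ (r : R) (x : L) (m : M), t =
        Finsupp.single (r • x, m) (1 : A) - r • Finsupp.single (x, m) (1 : A)} ∪
     {t | ∃ (x : L) (m n : M), t =
        Finsupp.single (x, m + n) (1 : A) - Finsupp.single (x, m) 1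
          - Finsupp.single (x, n) 1} ∪
     {t | ∃ (r : R) (x : L) (m : M), t =
        Finsupp.single (x, r • m) (1 : A) - r • Finsupp.single (x, m) (1 : A)} ∪
     {t | ∃ (x y : L) (m : M), t =
        Finsupp.single (SL.bracket x y, SM.alpha m) (1 : A)
          - Finsupp.single (SL.alpha x, actLM y m) 1
          + Finsupp.single (SL.alpha y, actLM x m) 1} ∪
     {t | ∃ (x : L) (m n : M), t =
        Finsupp.single (SL.alpha x, SM.bracket m n) (1 : A)
          - Finsupp.single (actML n x, SM.alpha m) 1
          + Finsupp.single (actML m x, SM.alpha n) 1} ∪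
     {t | ∃ (a b : A) (x y : L) (m n : M), t =
        Finsupp.single (a • actML m x, b • actLM y n) (1 : A)
          + Finsupp.single (b • actML n y, a • actLM x m) 1} ∪
     {t | ∃ (a b : A) (x y : L) (m n : M), t =
        Finsupp.single (a • actML m x, b • actLM y n) (1 : A)
          - φ (a * b) • Finsupp.single (actML m x, actLM y n) (1 : A)
          + (φ a * SM.rho (actLM x m) b) • Finsupp.single (SL.alpha y, SM.alpha n) (1 : A)
          - (φ b * SM.rho (actLM y n) a) • Finsupp.single (SL.alpha x, SM.alpha m) (1 : A)})

/-- The underlying `A`-module of the non-abelian tensor product `L ∗ M`. -/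
abbrev StarMod (SL : HLR R A φ L) (SM : HLR R A φ M)
    (actLM : L → M → M) (actML : M → L → L) : Type :=
  ((L × M) →₀ A) ⧸ starRel φ SL SM actLM actML

/-- The generator `x ∗ m` of `L ∗ M`. -/
noncomputable def starMk (SL : HLR R A φ L) (SM : HLR R A φ M)
    (actLM : L → M → M) (actML : M → L → L) (x : L) (m : M) :
    StarMod φ SL SM actLM actML :=
  Submodule.Quotient.mk (Finsupp.single (x, m) (1 : A))

/-- `U` is the hom-Lie-Rinehart structure of the non-abelian tensor product `L ∗ M`. -/
def IsStarStructure (SL : HLR R A φ L) (SM : HLR R A φ M)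
    (actLM : L → M → M) (actML : M → L → L)
    (U : HLR R A φ (StarMod φ SL SM actLM actML)) : Prop :=
  (∀ (x : L) (m : M),
      U.alpha (starMk φ SL SM actLM actML x m)
        = starMk φ SL SM actLM actML (SL.alpha x) (SM.alpha m)) ∧
  (∀ (a b : A) (x y : L) (m n : M),
      U.bracket (a • starMk φ SL SM actLM actML x m)
          (b • starMk φ SL SM actLM actML y n)
        = - starMk φ SL SM actLM actML (a • actML m x) (b • actLM y n)) ∧
  (∀ (x : L) (m : M) (a : A),
      U.rho (starMk φ SL SM actLM actML x m) a = SM.rho (actLM x m) a)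

/-- A hom-Lie-Rinehart pairing of `(L, α_L)` and `(M, α_M)` into `(N, α_N)`. -/
def IsHLRPairing {N : Type}
    [AddCommGroup N] [Module R N] [Module A N] [IsScalarTower R A N]
    (SL : HLR R A φ L) (SM : HLR R A φ M) (SN : HLR R A φ N)
    (actLM : L → M → M) (actML : M → L → L) (f : L → M → N) : Prop :=
  (∀ (x y : L) (m : M), f (x + y) m = f x m + f y m) ∧
  (∀ (r : R) (x : L) (m : M), f (r • x) m = r • f x m) ∧
  (∀ (x : L) (m n : M), f x (m + n) = f x m + f x n) ∧
  (∀ (r : R) (x : L) (m : M), f x (r • m) = r • f x m) ∧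
  (∀ (x : L) (m : M) (a : A), SN.rho (f x m) a = SM.rho (actLM x m) a) ∧
  (∀ (x y : L) (m : M),
      f (SL.bracket x y) (SM.alpha m)
        = f (SL.alpha x) (actLM y m) - f (SL.alpha y) (actLM x m)) ∧
  (∀ (x : L) (m n : M),
      f (SL.alpha x) (SM.bracket m n)
        = f (actML n x) (SM.alpha m) - f (actML m x) (SM.alpha n)) ∧
  (∀ (x : L) (m : M), f (SL.alpha x) (SM.alpha m) = SN.alpha (f x m)) ∧
  (∀ (a b : A) (x y : L) (m n : M),
      f (a • actML m x) (b • actLM y n)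
        = - (φ (a * b) • SN.bracket (f x m) (f y n))
          - (φ a * SN.rho (f x m) b) • SN.alpha (f y n)
          + (φ b * SN.rho (f y n) a) • SN.alpha (f x m))

end StarDefs

/-!
Pull a central extension `M' → L' → L` back along `σ : K → L`. The pullback `K ×_L L'` with its
first projection is a central extension of `K` with the same kernel `M'`, and homomorphisms
`h : K → L'` lifting `σ` are exactly the sections `x ↦ (x, h x)` of that projection. Hence the
unique splitting of the pullback extension yields the unique lift of `σ`.
-/

namespace IsHLRHom

variable {R A : Type} [CommRing R] [CommRing A] [Algebra R A] {φ : A →ₐ[R] A}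
variable {K L N : Type}
  [AddCommGroup K] [Module R K] [Module A K] [IsScalarTower R A K]
  [AddCommGroup L] [Module R L] [Module A L] [IsScalarTower R A L]
  [AddCommGroup N] [Module R N] [Module A N] [IsScalarTower R A N]
  {SK : HLR R A φ K} {SL : HLR R A φ L} {SN : HLR R A φ N} {f : K → L}

def toLinearMap (hf : IsHLRHom SK SL f) : K →ₗ[A] L where
  toFun := f
  map_add' := hf.1
  map_smul' := hf.2.1

lemma map_zero (hf : IsHLRHom SK SL f) : f 0 = 0 :=
  hf.toLinearMap.map_zero

lemma comp {g : L → N} (hg : IsHLRHom SL SN g) (hf : IsHLRHom SK SL f) :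
    IsHLRHom SK SN (g ∘ f) :=
  ⟨fun x y => (congrArg g (hf.1 x y)).trans (hg.1 _ _),
   fun a x => (congrArg g (hf.2.1 a x)).trans (hg.2.1 _ _),
   fun x y => (congrArg g (hf.2.2.1 x y)).trans (hg.2.2.1 _ _),
   fun x => (congrArg g (hf.2.2.2.1 x)).trans (hg.2.2.2.1 _),
   fun x a => (hg.2.2.2.2 _ a).trans (hf.2.2.2.2 x a)⟩

end IsHLRHom

namespace HLR

variable {R A : Type} [CommRing R] [CommRing A] [Algebra R A] {φ : A →ₐ[R] A}
variable {L : Type} [AddCommGroup L] [Module R L] [Module A L] [IsScalarTower R A L]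
  (S : HLR R A φ L)

lemma bracket_zero_left (z : L) : S.bracket 0 z = 0 :=
  (AddMonoidHom.mk' (S.bracket · z) (S.add_left · · z)).map_zero

lemma alpha_zero : S.alpha 0 = 0 :=
  (AddMonoidHom.mk' S.alpha S.alpha_add).map_zero

lemma rho_zero_left (a : A) : S.rho 0 a = 0 :=
  (AddMonoidHom.mk' (S.rho · a) (S.rho_add_left · · a)).map_zero

variable {S}

lemma rho_eq_zero_of_mem_center {x : L} (hx : x ∈ S.center) (a : A) : S.rho x a = 0 :=
  (hx a 0).2.2

end HLR

section Pullback

variable {R A : Type} [CommRing R] [CommRing A] [Algebra R A] {φ : A →ₐ[R] A}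
variable {K L' L : Type}
  [AddCommGroup K] [Module R K] [Module A K] [IsScalarTower R A K]
  [AddCommGroup L'] [Module R L'] [Module A L'] [IsScalarTower R A L']
  [AddCommGroup L] [Module R L] [Module A L] [IsScalarTower R A L]
  {SK : HLR R A φ K} {SL' : HLR R A φ L'} {SL : HLR R A φ L} {σ : K → L} {τ : L' → L}
  (hσ : IsHLRHom SK SL σ) (hτ : IsHLRHom SL' SL τ)

def pullbackSubmodule : Submodule A (K × L') :=
  LinearMap.eqLocus (hσ.toLinearMap ∘ₗ LinearMap.fst A K L')
    (hτ.toLinearMap ∘ₗ LinearMap.snd A K L')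

lemma mem_pullbackSubmodule {p : K × L'} : p ∈ pullbackSubmodule hσ hτ ↔ σ p.1 = τ p.2 :=
  Iff.rfl

lemma pullbackSubmodule_spec (p : pullbackSubmodule hσ hτ) : σ p.1.1 = τ p.1.2 := p.2

lemma rho_pullback_snd (p : pullbackSubmodule hσ hτ) (a : A) :
    SL'.rho p.1.2 a = SK.rho p.1.1 a := by
  rw [← hτ.2.2.2.2, ← pullbackSubmodule_spec hσ hτ p, hσ.2.2.2.2]

def HLR.pullback : HLR R A φ (pullbackSubmodule hσ hτ) where
  bracket p q := ⟨(SK.bracket p.1.1 q.1.1, SL'.bracket p.1.2 q.1.2),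
    (mem_pullbackSubmodule hσ hτ).2 <| by
      rw [hσ.2.2.1, hτ.2.2.1, pullbackSubmodule_spec hσ hτ p, pullbackSubmodule_spec hσ hτ q]⟩
  add_left x y z := by
    apply Subtype.ext; apply Prod.ext <;> simp [SK.add_left, SL'.add_left]
  add_right x y z := by
    apply Subtype.ext; apply Prod.ext <;> simp [SK.add_right, SL'.add_right]
  smul_left r x y := by
    apply Subtype.ext; apply Prod.ext <;> simp [SK.smul_left, SL'.smul_left]
  smul_right r x y := by
    apply Subtype.ext; apply Prod.ext <;> simp [SK.smul_right, SL'.smul_right]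
  skew x y := by
    apply Subtype.ext; apply Prod.ext <;> simp [SK.skew x.1.1 y.1.1, SL'.skew x.1.2 y.1.2]
  alpha p := ⟨(SK.alpha p.1.1, SL'.alpha p.1.2),
    (mem_pullbackSubmodule hσ hτ).2 <| by
      rw [hσ.2.2.2.1, hτ.2.2.2.1, pullbackSubmodule_spec hσ hτ p]⟩
  alpha_add x y := by
    apply Subtype.ext; apply Prod.ext <;> simp [SK.alpha_add, SL'.alpha_add]
  alpha_smulR r x := by
    apply Subtype.ext; apply Prod.ext <;> simp [SK.alpha_smulR, SL'.alpha_smulR]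
  rho p a := SK.rho p.1.1 a
  rho_add_left x y a := by simp [SK.rho_add_left]
  rho_smulR_left r x a := by simp [SK.rho_smulR_left]
  rho_add_right x a b := SK.rho_add_right _ a b
  rho_smulR_right x r a := SK.rho_smulR_right _ r a
  rho_deriv x a b := SK.rho_deriv _ a b
  alpha_bracket x y := by
    apply Subtype.ext; apply Prod.ext <;> simp [SK.alpha_bracket, SL'.alpha_bracket]
  hom_jacobi x y z := by
    apply Subtype.ext; apply Prod.ext
    · simpa using SK.hom_jacobi x.1.1 y.1.1 z.1.1
    · simpa using SL'.hom_jacobi x.1.2 y.1.2 z.1.2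
  alpha_smulA a x := by
    apply Subtype.ext; apply Prod.ext <;> simp [SK.alpha_smulA, SL'.alpha_smulA]
  rho_alpha x a := SK.rho_alpha _ a
  rho_bracket x y a := SK.rho_bracket _ _ a
  rho_smulA a x b := by simp [SK.rho_smulA]
  leibniz x a y := by
    apply Subtype.ext; apply Prod.ext
    · simpa using SK.leibniz x.1.1 a y.1.1
    · simpa [rho_pullback_snd hσ hτ x a] using SL'.leibniz x.1.2 a y.1.2

lemma isHLRHom_pullback_fst : IsHLRHom (HLR.pullback hσ hτ) SK fun p => p.1.1 :=
  ⟨fun _ _ => rfl, fun _ _ => rfl, fun _ _ => rfl, fun _ => rfl, fun _ _ => rfl⟩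

lemma isHLRHom_pullback_snd : IsHLRHom (HLR.pullback hσ hτ) SL' fun p => p.1.2 :=
  ⟨fun _ _ => rfl, fun _ _ => rfl, fun _ _ => rfl, fun _ => rfl, rho_pullback_snd hσ hτ⟩

def pullbackLift {h : K → L'} (hh : ∀ x, τ (h x) = σ x) (x : K) : pullbackSubmodule hσ hτ :=
  ⟨(x, h x), (hh x).symm⟩

lemma isHLRHom_pullbackLift {h : K → L'} (hh : ∀ x, τ (h x) = σ x) (hhom : IsHLRHom SK SL' h) :
    IsHLRHom SK (HLR.pullback hσ hτ) (pullbackLift hσ hτ hh) :=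
  ⟨fun x y => Subtype.ext (Prod.ext rfl (hhom.1 x y)),
   fun a x => Subtype.ext (Prod.ext rfl (hhom.2.1 a x)),
   fun x y => Subtype.ext (Prod.ext rfl (hhom.2.2.1 x y)),
   fun x => Subtype.ext (Prod.ext rfl (hhom.2.2.2.1 x)),
   fun _ _ => rfl⟩

variable {M' : Type} [AddCommGroup M'] [Module R M'] [Module A M'] [IsScalarTower R A M']
  {SM' : HLR R A φ M'} {j : M' → L'}

lemma HLR.pullback_mem_center {p : pullbackSubmodule hσ hτ} (hp₁ : p.1.1 = 0)
    (hp₂ : p.1.2 ∈ SL'.center) : p ∈ (HLR.pullback hσ hτ).center := by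
  intro a z
  refine ⟨Subtype.ext (Prod.ext ?_ (hp₂ a z.1.2).1),
    Subtype.ext (Prod.ext ?_ (hp₂ a z.1.2).2.1), ?_⟩
  · change SK.bracket (a • p.1.1) z.1.1 = 0
    rw [hp₁, smul_zero, SK.bracket_zero_left]
  · change SK.bracket (a • SK.alpha p.1.1) z.1.1 = 0
    rw [hp₁, SK.alpha_zero, smul_zero, SK.bracket_zero_left]
  · change SK.rho p.1.1 a = 0
    rw [hp₁, SK.rho_zero_left]

variable {M' : Type} [AddCommGroup M'] [Module R M'] [Module A M'] [IsScalarTower R A M']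
  {SM' : HLR R A φ M'} {j : M' → L'}

def pullbackInr (hj : ∀ m, τ (j m) = 0) (m : M') : pullbackSubmodule hσ hτ :=
  ⟨(0, j m), hσ.map_zero.trans (hj m).symm⟩

lemma isHLRHom_pullbackInr (hj : IsHLRHom SM' SL' j) (hj_center : ∀ m, j m ∈ SL'.center)
    (hτj : ∀ m, τ (j m) = 0) : IsHLRHom SM' (HLR.pullback hσ hτ) (pullbackInr hσ hτ hτj) := by
  refine ⟨fun m n => Subtype.ext (Prod.ext (add_zero 0).symm (hj.1 m n)),
    fun a m => Subtype.ext (Prod.ext (smul_zero a).symm (hj.2.1 a m)),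
    fun m n => Subtype.ext (Prod.ext (SK.bracket_zero_left 0).symm (hj.2.2.1 m n)),
    fun m => Subtype.ext (Prod.ext SK.alpha_zero.symm (hj.2.2.2.1 m)), fun m a => ?_⟩
  change SK.rho 0 a = SM'.rho m a
  rw [SK.rho_zero_left, ← hj.2.2.2.2, HLR.rho_eq_zero_of_mem_center (hj_center m)]

lemma IsCentralExt.map_eq_zero (hext : IsCentralExt SM' SL' SL j τ) (m : M') : τ (j m) = 0 :=
  hext.2.2.2.2.1.subset ⟨m, rfl⟩

theorem IsCentralExt.pullback (hext : IsCentralExt SM' SL' SL j τ) :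
    IsCentralExt SM' (HLR.pullback hσ hext.2.1) SK
      (pullbackInr hσ hext.2.1 hext.map_eq_zero) fun p => p.1.1 := by
  obtain ⟨hj, hτ, hj_inj, hτ_surj, hj_range, hker⟩ := hext
  have hker_snd (p : pullbackSubmodule hσ hτ) (hp : p.1.1 = 0) : τ p.1.2 = 0 := by
    rw [← pullbackSubmodule_spec hσ hτ p, hp, hσ.map_zero]
  refine ⟨isHLRHom_pullbackInr hσ hτ hj (fun m => hker (hj_range.subset ⟨m, rfl⟩)) _,
    isHLRHom_pullback_fst hσ hτ, fun m n h => hj_inj (congrArg (fun p => p.1.2) h),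
    fun k => ?_, ?_, fun p hp => HLR.pullback_mem_center hσ hτ hp (hker (hker_snd p hp))⟩
  · obtain ⟨l', hl'⟩ := hτ_surj (σ k)
    exact ⟨⟨(k, l'), hl'.symm⟩, rfl⟩
  · ext p
    refine ⟨?_, fun hp => ?_⟩
    · rintro ⟨m, rfl⟩
      rfl
    · obtain ⟨m, hm⟩ := hj_range.symm.subset (hker_snd p hp)
      exact ⟨m, Subtype.ext (Prod.ext hp.symm hm)⟩

end Pullback

/-- if every central extension of `(K, α_K)` splits uniquely, then the central
extension `(M, α_M) → (K, α_K) → (L, α_L)` is a universal central extension. -/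
theorem statement_0
    {R A : Type} [CommRing R] [CommRing A] [Algebra R A] (φ : A →ₐ[R] A)
    {M K L : Type}
    [AddCommGroup M] [Module R M] [Module A M] [IsScalarTower R A M]
    [AddCommGroup K] [Module R K] [Module A K] [IsScalarTower R A K]
    [AddCommGroup L] [Module R L] [Module A L] [IsScalarTower R A L]
    (SM : HLR R A φ M) (SK : HLR R A φ K) (SL : HLR R A φ L)
    (i : M → K) (σ : K → L)
    (hce : IsCentralExt SM SK SL i σ)
    (hsplit : ∀ (N L' : Type)
      [AddCommGroup N] [Module R N] [Module A N] [IsScalarTower R A N]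
      [AddCommGroup L'] [Module R L'] [Module A L'] [IsScalarTower R A L']
      (SN : HLR R A φ N) (SL' : HLR R A φ L') (j : N → L') (τ : L' → K),
      IsCentralExt SN SL' SK j τ →
      ∃! s : K → L', IsHLRHom SK SL' s ∧ ∀ x, τ (s x) = x) :
    IsUniversalCentralExt SM SK SL i σ := by
  refine ⟨hce, fun M' L' _ _ _ _ _ _ _ _ SM' SL' j τ hext => ?_⟩
  have hσ := hce.2.1
  have hτ := hext.2.1
  obtain ⟨s, ⟨hs, hs_section⟩, hs_unique⟩ := hsplit _ _ SM' _ _ _ (hext.pullback hσ)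
  refine ⟨fun x => (s x).1.2, ⟨(isHLRHom_pullback_snd hσ hτ).comp hs, fun x => ?_⟩, ?_⟩
  · rw [← pullbackSubmodule_spec hσ hτ (s x), hs_section]
  · rintro h ⟨hh, hh_lift⟩
    have hlift_eq : pullbackLift hσ hτ hh_lift = s :=
      hs_unique _ ⟨isHLRHom_pullbackLift hσ hτ hh_lift hh, fun _ => rfl⟩
    exact funext fun x => congrArg (fun p => p.1.2) (congrFun hlift_eq x)
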